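/- Let Ω = (0, L) × (0, 1) ⊂ ℝ² with L > 0, e_g = (0, −1), u_s ∈ ℝ, κ > 0, Δt > 0, let y denote the second coordinate function and Γ₁ = {(x, 1)} the top wall. Let u : cl(Ω) → ℝ² be continuously differentiable with div u = 0 in Ω and u·n = 0 on ∂Ω, and let φ₁, φ₂ : cl(Ω) → ℝ be continuously differentiable; set m = (φ₁ + φ₂)/2 and u_p = u + u_s e_g. Suppose the midpoint-rule discrete transport equation tested against y holds: ∫_Ω ((φ₂ − φ₁)/Δt) y dx + ½ ∫_Ω div(u_p m) y dx − ½ ∫_Ω m div(u_p y) dx + (u_s/2) ∫_{Γ₁} m dΓ = −κ ∫_Ω ∇m·∇y dx. Then the discrete potential energy balance holds: ∫_Ω φ₂ y dx − ∫_Ω φ₁ y dx = −Δt ( u_s ∫_Ω m dx − κ ∫_Ω ∇m·e_g dx ) − Δt ∫_Ω m (u·e_g) dx. -/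

import Mathlib

/-!
The convection term of the scheme is the skew-symmetric form
`½ (div (m u_p), y) - ½ (m, div (y u_p))`. Since `div u_p = div u = 0`, the product rule gives
`div (m u_p) y + m div (y u_p) = div (y m u_p)`, and by the divergence theorem the integral of the
latter is the flux through the top wall alone (`y = 0` at the bottom, `u_p · n = 0` on the
sides), where `u_p · n = -u_s`. Half of this flux is cancelled by the boundary term
`(u_s / 2) ∫_{Γ₁} m` of the scheme, so the skew form reduces to
`-(m, div (y u_p)) = -(m, u_p · ∇y) = (m, u · e_g) + u_s ∫ m`, using `∇y = -e_g` and
`e_g · e_g = 1`; likewise `-κ (∇m, ∇y) = κ (∇m, e_g)`.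
-/

open MeasureTheory Set

/-- Partial derivative in the first spatial direction. -/
noncomputable def d1 (f : ℝ × ℝ → ℝ) (x : ℝ × ℝ) : ℝ := fderiv ℝ f x ((1 : ℝ), (0 : ℝ))

/-- Partial derivative in the second spatial direction. -/
noncomputable def d2 (f : ℝ × ℝ → ℝ) (x : ℝ × ℝ) : ℝ := fderiv ℝ f x ((0 : ℝ), (1 : ℝ))

/-- Gradient of a scalar field on `ℝ²`. -/
noncomputable def grad (f : ℝ × ℝ → ℝ) (x : ℝ × ℝ) : ℝ × ℝ := (d1 f x, d2 f x)

/-- Divergence of a vector field on `ℝ²`. -/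
noncomputable def div2 (w : ℝ × ℝ → ℝ × ℝ) (x : ℝ × ℝ) : ℝ :=
  d1 (fun y => (w y).1) x + d2 (fun y => (w y).2) x

/-- Laplacian of a scalar field on `ℝ²`. -/
noncomputable def lap (f : ℝ × ℝ → ℝ) (x : ℝ × ℝ) : ℝ := d1 (d1 f) x + d2 (d2 f) x

/-- Dot product on `ℝ²`. -/
def dot (a b : ℝ × ℝ) : ℝ := a.1 * b.1 + a.2 * b.2

/-- Unit vector in the direction of gravity. -/
noncomputable def eg : ℝ × ℝ := ((0 : ℝ), (-1 : ℝ))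

section PartialDerivatives

variable {f g : ℝ × ℝ → ℝ} {w : ℝ × ℝ → ℝ × ℝ} {x : ℝ × ℝ}

theorem d1_mul (hf : DifferentiableAt ℝ f x) (hg : DifferentiableAt ℝ g x) :
    d1 (fun y => f y * g y) x = d1 f x * g x + f x * d1 g x := by
  simp only [d1, fderiv_fun_mul hf hg, add_apply, smul_apply, smul_eq_mul]
  ring

theorem d2_mul (hf : DifferentiableAt ℝ f x) (hg : DifferentiableAt ℝ g x) :
    d2 (fun y => f y * g y) x = d2 f x * g x + f x * d2 g x := by
  simp only [d2, fderiv_fun_mul hf hg, add_apply, smul_apply, smul_eq_mul]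
  ring

theorem grad_snd : grad (fun z : ℝ × ℝ => z.2) x = -eg := by
  simp [grad, d1, d2, fderiv_snd, eg]

theorem dot_neg_right (a b : ℝ × ℝ) : dot a (-b) = -dot a b := by
  simp only [dot, Prod.fst_neg, Prod.snd_neg]
  ring

theorem div2_smul (hf : DifferentiableAt ℝ f x) (hw : DifferentiableAt ℝ w x) :
    div2 (fun y => f y • w y) x = dot (grad f x) (w x) + f x * div2 w x := by
  simp only [div2, Prod.smul_fst, Prod.smul_snd, smul_eq_mul, d1_mul hf hw.fst,
    d2_mul hf hw.snd, dot, grad]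
  ring

theorem div2_add_const (c : ℝ × ℝ) : div2 (fun y => w y + c) x = div2 w x := by
  simp only [div2, d1, d2, Prod.fst_add, Prod.snd_add, fderiv_add_const]

theorem div2_smul_mul_add_mul_div2_smul {m ψ : ℝ × ℝ → ℝ} (hm : DifferentiableAt ℝ m x)
    (hψ : DifferentiableAt ℝ ψ x) (hw : DifferentiableAt ℝ w x) :
    div2 (fun y => m y • w y) x * ψ x + m x * div2 (fun y => ψ y • w y) x
      = div2 (fun y => ψ y • m y • w y) x + m x * ψ x * div2 w x := by
  rw [div2_smul hm hw, div2_smul hψ hw, div2_smul hψ (hm.fun_smul hw), div2_smul hm hw]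
  simp only [dot, Prod.smul_fst, Prod.smul_snd, smul_eq_mul]
  ring

end PartialDerivatives

section Continuity

variable {f : ℝ × ℝ → ℝ} {w : ℝ × ℝ → ℝ × ℝ}

theorem ContDiff.continuous_d1 (hf : ContDiff ℝ 1 f) : Continuous (d1 f) :=
  (hf.continuous_fderiv one_ne_zero).clm_apply continuous_const

theorem ContDiff.continuous_d2 (hf : ContDiff ℝ 1 f) : Continuous (d2 f) :=
  (hf.continuous_fderiv one_ne_zero).clm_apply continuous_const

theorem ContDiff.continuous_div2 (hw : ContDiff ℝ 1 w) : Continuous (div2 w) :=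
  (contDiff_fst.comp hw).continuous_d1.add (contDiff_snd.comp hw).continuous_d2

theorem Continuous.dot {X : Type*} [TopologicalSpace X] {a b : X → ℝ × ℝ} (ha : Continuous a)
    (hb : Continuous b) : Continuous fun x => dot (a x) (b x) :=
  (ha.fst.mul hb.fst).add (ha.snd.mul hb.snd)

end Continuity

theorem Continuous.integrableOn_Ioo_prod_Ioo {f : ℝ × ℝ → ℝ} (hf : Continuous f)
    {a₁ b₁ a₂ b₂ : ℝ} : IntegrableOn f (Ioo a₁ b₁ ×ˢ Ioo a₂ b₂) :=
  (hf.integrableOn_Icc (a := (a₁, a₂)) (b := (b₁, b₂))).mono_set <| by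
    rw [← Icc_prod_Icc]
    exact prod_mono Ioo_subset_Icc_self Ioo_subset_Icc_self

theorem integral_div2_Ioo_prod_Ioo {w : ℝ × ℝ → ℝ × ℝ} (hw : ContDiff ℝ 1 w)
    {a₁ b₁ a₂ b₂ : ℝ} (h₁ : a₁ ≤ b₁) (h₂ : a₂ ≤ b₂) :
    ∫ x in Ioo a₁ b₁ ×ˢ Ioo a₂ b₂, div2 w x
      = (((∫ x in a₁..b₁, (w (x, b₂)).2) - ∫ x in a₁..b₁, (w (x, a₂)).2)
          + ∫ y in a₂..b₂, (w (b₁, y)).1) - ∫ y in a₂..b₂, (w (a₁, y)).1 := by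
  have hw₁ : ContDiff ℝ 1 (fun y => (w y).1) := contDiff_fst.comp hw
  have hw₂ : ContDiff ℝ 1 (fun y => (w y).2) := contDiff_snd.comp hw
  have hIcc : Ioo a₁ b₁ ×ˢ Ioo a₂ b₂ =ᵐ[volume] Icc (a₁, a₂) (b₁, b₂) := by
    rw [← Icc_prod_Icc, Measure.volume_eq_prod]
    exact Measure.set_prod_ae_eq Ioo_ae_eq_Icc Ioo_ae_eq_Icc
  rw [setIntegral_congr_set hIcc]
  exact integral_divergence_prod_Icc_of_hasFDerivAt_of_le _ _ _ _ (a₁, a₂) (b₁, b₂) ⟨h₁, h₂⟩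
    hw₁.continuous.continuousOn hw₂.continuous.continuousOn
    (fun x _ => (hw₁.differentiable one_ne_zero x).hasFDerivAt)
    (fun x _ => (hw₂.differentiable one_ne_zero x).hasFDerivAt)
    hw.continuous_div2.integrableOn_Icc

theorem integral_div2_snd_smul {L : ℝ} (hL : 0 ≤ L) {F : ℝ × ℝ → ℝ × ℝ} (hF : ContDiff ℝ 1 F)
    (hleft : ∀ y ∈ Icc (0 : ℝ) 1, (F (0, y)).1 = 0)
    (hright : ∀ y ∈ Icc (0 : ℝ) 1, (F (L, y)).1 = 0) :
    ∫ x in Ioo 0 L ×ˢ Ioo (0 : ℝ) 1, div2 (fun y => y.2 • F y) x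
      = ∫ x in Ioo 0 L, (F (x, 1)).2 := by
  have hside : ∀ a, (∀ y ∈ Icc (0 : ℝ) 1, (F (a, y)).1 = 0) →
      ∫ y in (0 : ℝ)..1, ((a, y).2 • F (a, y)).1 = 0 := fun a ha =>
    intervalIntegral.integral_zero_ae <| .of_forall fun y hy => by
      rw [uIoc_of_le zero_le_one] at hy
      simp [ha y (Ioc_subset_Icc_self hy)]
  rw [integral_div2_Ioo_prod_Ioo (contDiff_snd.fun_smul hF) hL zero_le_one, hside L hright,
    hside 0 hleft, intervalIntegral.integral_of_le hL, integral_Ioc_eq_integral_Ioo]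
  simp

theorem integral_skew_convection_snd {L : ℝ} (hL : 0 ≤ L) {m : ℝ × ℝ → ℝ}
    {w : ℝ × ℝ → ℝ × ℝ} (hm : ContDiff ℝ 1 m) (hw : ContDiff ℝ 1 w)
    (hdiv : ∀ x ∈ Ioo 0 L ×ˢ Ioo (0 : ℝ) 1, div2 w x = 0)
    (hleft : ∀ y ∈ Icc (0 : ℝ) 1, (w (0, y)).1 = 0)
    (hright : ∀ y ∈ Icc (0 : ℝ) 1, (w (L, y)).1 = 0) :
    (1 / 2) * (∫ x in Ioo 0 L ×ˢ Ioo (0 : ℝ) 1, div2 (fun y => m y • w y) x * x.2)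
      - (1 / 2) * (∫ x in Ioo 0 L ×ˢ Ioo (0 : ℝ) 1, m x * div2 (fun y => y.2 • w y) x)
      - (1 / 2) * (∫ x in Ioo 0 L, m (x, 1) * (w (x, 1)).2)
      = ∫ x in Ioo 0 L ×ˢ Ioo (0 : ℝ) 1, m x * dot (w x) eg := by
  have hR : MeasurableSet (Ioo 0 L ×ˢ Ioo (0 : ℝ) 1) := measurableSet_Ioo.prod measurableSet_Ioo
  have dm := hm.differentiable one_ne_zero
  have dw := hw.differentiable one_ne_zero
  have hmw : ContDiff ℝ 1 (fun y => m y • w y) := hm.fun_smul hw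
  have hyw : ContDiff ℝ 1 (fun y : ℝ × ℝ => y.2 • w y) := contDiff_snd.fun_smul hw
  have hflux : (∫ x in Ioo 0 L ×ˢ Ioo (0 : ℝ) 1, div2 (fun y => m y • w y) x * x.2)
      + (∫ x in Ioo 0 L ×ˢ Ioo (0 : ℝ) 1, m x * div2 (fun y => y.2 • w y) x)
      = ∫ x in Ioo 0 L, m (x, 1) * (w (x, 1)).2 := by
    rw [← integral_add (hmw.continuous_div2.fun_mul continuous_snd).integrableOn_Ioo_prod_Ioo
      (hm.continuous.fun_mul hyw.continuous_div2).integrableOn_Ioo_prod_Ioo]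
    calc _ = ∫ x in Ioo 0 L ×ˢ Ioo (0 : ℝ) 1, div2 (fun y => y.2 • m y • w y) x :=
          setIntegral_congr_fun hR fun x hx => by
            rw [div2_smul_mul_add_mul_div2_smul (dm x) differentiableAt_snd (dw x), hdiv x hx,
              mul_zero, add_zero]
      _ = ∫ x in Ioo 0 L, (m (x, 1) • w (x, 1)).2 :=
          integral_div2_snd_smul hL hmw (fun y hy => by simp [hleft y hy])
            (fun y hy => by simp [hright y hy])
      _ = _ := by simp only [Prod.smul_snd, smul_eq_mul]
  have hheight : (∫ x in Ioo 0 L ×ˢ Ioo (0 : ℝ) 1, m x * div2 (fun y => y.2 • w y) x)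
      = -∫ x in Ioo 0 L ×ˢ Ioo (0 : ℝ) 1, m x * dot (w x) eg := by
    rw [← integral_neg]
    refine setIntegral_congr_fun hR fun x hx => ?_
    rw [div2_smul differentiableAt_snd (dw x), grad_snd, hdiv x hx]
    simp only [dot, eg, Prod.fst_neg, Prod.snd_neg]
    ring
  linear_combination (1 / 2) * hflux - hheight

theorem integral_skew_convection_settling_snd {L : ℝ} (hL : 0 ≤ L) (u_s : ℝ)
    {m : ℝ × ℝ → ℝ} {u : ℝ × ℝ → ℝ × ℝ} (hm : ContDiff ℝ 1 m) (hu : ContDiff ℝ 1 u)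
    (hdiv : ∀ x ∈ Ioo 0 L ×ˢ Ioo (0 : ℝ) 1, div2 u x = 0)
    (htop : ∀ x ∈ Icc 0 L, (u (x, 1)).2 = 0)
    (hleft : ∀ y ∈ Icc (0 : ℝ) 1, (u (0, y)).1 = 0)
    (hright : ∀ y ∈ Icc (0 : ℝ) 1, (u (L, y)).1 = 0) :
    (1 / 2) * (∫ x in Ioo 0 L ×ˢ Ioo (0 : ℝ) 1, div2 (fun y => m y • (u y + u_s • eg)) x * x.2)
      - (1 / 2) * (∫ x in Ioo 0 L ×ˢ Ioo (0 : ℝ) 1,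
          m x * div2 (fun y => y.2 • (u y + u_s • eg)) x)
      + (u_s / 2) * (∫ x in Ioo 0 L, m (x, 1))
      = (∫ x in Ioo 0 L ×ˢ Ioo (0 : ℝ) 1, m x * dot (u x) eg)
        + u_s * ∫ x in Ioo 0 L ×ˢ Ioo (0 : ℝ) 1, m x := by
  have hconv := integral_skew_convection_snd (w := fun y => u y + u_s • eg) hL hm
    (hu.add contDiff_const) (fun x hx => by rw [div2_add_const, hdiv x hx])
    (fun y hy => by simp [eg, hleft y hy]) (fun y hy => by simp [eg, hright y hy])
  have htop_flux : (∫ x in Ioo 0 L, m (x, 1) * (u (x, 1) + u_s • eg).2)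
      = -u_s * ∫ x in Ioo 0 L, m (x, 1) := by
    rw [← integral_const_mul]
    refine setIntegral_congr_fun measurableSet_Ioo fun x hx => ?_
    simp [eg, htop x (Ioo_subset_Icc_self hx), mul_comm]
  have hbuoyancy : (∫ x in Ioo 0 L ×ˢ Ioo (0 : ℝ) 1, m x * dot (u x + u_s • eg) eg)
      = (∫ x in Ioo 0 L ×ˢ Ioo (0 : ℝ) 1, m x * dot (u x) eg)
        + u_s * ∫ x in Ioo 0 L ×ˢ Ioo (0 : ℝ) 1, m x := by
    rw [← integral_const_mul, ← integral_add
      (hm.continuous.fun_mul (hu.continuous.dot continuous_const)).integrableOn_Ioo_prod_Ioo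
      (continuous_const.fun_mul hm.continuous).integrableOn_Ioo_prod_Ioo]
    refine setIntegral_congr_fun (measurableSet_Ioo.prod measurableSet_Ioo) fun x _ => ?_
    simp only [dot, eg, Prod.fst_add, Prod.snd_add, Prod.smul_fst, Prod.smul_snd, smul_eq_mul]
    ring
  rw [htop_flux, hbuoyancy] at hconv
  linear_combination hconv

theorem discrete_potential_energy_balance_general
    (L u_s κ Δt : ℝ) (hL : 0 < L) (hΔt : 0 < Δt)
    (u : ℝ × ℝ → ℝ × ℝ) (φ₁ φ₂ : ℝ × ℝ → ℝ)
    (hu : ContDiff ℝ 1 u) (hφ₁ : ContDiff ℝ 1 φ₁) (hφ₂ : ContDiff ℝ 1 φ₂)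
    (hdiv : ∀ x ∈ Ioo 0 L ×ˢ Ioo (0 : ℝ) 1, div2 u x = 0)
    (htop : ∀ x ∈ Icc 0 L, (u (x, 1)).2 = 0)
    (hleft : ∀ y ∈ Icc (0 : ℝ) 1, (u (0, y)).1 = 0)
    (hright : ∀ y ∈ Icc (0 : ℝ) 1, (u (L, y)).1 = 0)
    (htested :
      (∫ x in Ioo 0 L ×ˢ Ioo (0 : ℝ) 1, ((φ₂ x - φ₁ x) / Δt) * x.2)
        + (1 / 2) * (∫ x in Ioo 0 L ×ˢ Ioo (0 : ℝ) 1,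
            div2 (fun y => ((φ₁ y + φ₂ y) / 2) • (u y + u_s • eg)) x * x.2)
        - (1 / 2) * (∫ x in Ioo 0 L ×ˢ Ioo (0 : ℝ) 1,
            ((φ₁ x + φ₂ x) / 2) * div2 (fun y => y.2 • (u y + u_s • eg)) x)
        + (u_s / 2) * (∫ x in Ioo 0 L, (φ₁ (x, 1) + φ₂ (x, 1)) / 2)
      = -(κ * ∫ x in Ioo 0 L ×ˢ Ioo (0 : ℝ) 1,
            dot (grad (fun y => (φ₁ y + φ₂ y) / 2) x) (grad (fun z => z.2) x))) :
    (∫ x in Ioo 0 L ×ˢ Ioo (0 : ℝ) 1, φ₂ x * x.2)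
      - (∫ x in Ioo 0 L ×ˢ Ioo (0 : ℝ) 1, φ₁ x * x.2)
    = -(Δt * ((u_s * ∫ x in Ioo 0 L ×ˢ Ioo (0 : ℝ) 1, (φ₁ x + φ₂ x) / 2)
          - κ * ∫ x in Ioo 0 L ×ˢ Ioo (0 : ℝ) 1, dot (grad (fun y => (φ₁ y + φ₂ y) / 2) x) eg))
      - Δt * ∫ x in Ioo 0 L ×ˢ Ioo (0 : ℝ) 1, ((φ₁ x + φ₂ x) / 2) * dot (u x) eg := by
  have hconv := integral_skew_convection_settling_snd hL.le u_s
    ((hφ₁.add hφ₂).div_const 2) hu hdiv htop hleft hright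
  have htime : (∫ x in Ioo 0 L ×ˢ Ioo (0 : ℝ) 1, φ₂ x * x.2)
        - (∫ x in Ioo 0 L ×ˢ Ioo (0 : ℝ) 1, φ₁ x * x.2)
      = Δt * ∫ x in Ioo 0 L ×ˢ Ioo (0 : ℝ) 1, ((φ₂ x - φ₁ x) / Δt) * x.2 := by
    rw [← integral_sub (hφ₂.continuous.fun_mul continuous_snd).integrableOn_Ioo_prod_Ioo
      (hφ₁.continuous.fun_mul continuous_snd).integrableOn_Ioo_prod_Ioo, ← integral_const_mul]
    refine setIntegral_congr_fun (measurableSet_Ioo.prod measurableSet_Ioo) fun x _ => ?_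
    field_simp
  simp only [grad_snd, dot_neg_right, integral_neg] at htested
  linear_combination htime + Δt * htested - Δt * hconv

/-- Discrete potential energy balance of the midpoint-rule (one-stage Gauss)
time discretization of the particle transport equation, tested against the
height `y`: the discrete potential energy changes exactly by the settling
dissipation `ε_s = u_s ∫_Ω m − κ ∫_Ω ∇m·e_g` and the buoyancy exchange term
`∫_Ω m (u·e_g)`, where `m = (φ₁ + φ₂)/2` and `u_p = u + u_s e_g`. -/
theorem discrete_potential_energy_balance
    (L u_s κ Δt : ℝ) (hL : 0 < L) (hκ : 0 < κ) (hΔt : 0 < Δt)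
    (u : ℝ × ℝ → ℝ × ℝ) (φ₁ φ₂ : ℝ × ℝ → ℝ)
    (hu : ContDiff ℝ 1 u) (hφ₁ : ContDiff ℝ 1 φ₁) (hφ₂ : ContDiff ℝ 1 φ₂)
    (hdiv : ∀ x ∈ Ioo 0 L ×ˢ Ioo (0 : ℝ) 1, div2 u x = 0)
    (hbottom : ∀ x ∈ Icc 0 L, (u (x, 0)).2 = 0)
    (htop : ∀ x ∈ Icc 0 L, (u (x, 1)).2 = 0)
    (hleft : ∀ y ∈ Icc (0 : ℝ) 1, (u (0, y)).1 = 0)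
    (hright : ∀ y ∈ Icc (0 : ℝ) 1, (u (L, y)).1 = 0)
    (htested :
      (∫ x in Ioo 0 L ×ˢ Ioo (0 : ℝ) 1, ((φ₂ x - φ₁ x) / Δt) * x.2)
        + (1 / 2) * (∫ x in Ioo 0 L ×ˢ Ioo (0 : ℝ) 1,
            div2 (fun y => ((φ₁ y + φ₂ y) / 2) • (u y + u_s • eg)) x * x.2)
        - (1 / 2) * (∫ x in Ioo 0 L ×ˢ Ioo (0 : ℝ) 1,
            ((φ₁ x + φ₂ x) / 2) * div2 (fun y => y.2 • (u y + u_s • eg)) x)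
        + (u_s / 2) * (∫ x in Ioo 0 L, (φ₁ (x, 1) + φ₂ (x, 1)) / 2)
      = -(κ * ∫ x in Ioo 0 L ×ˢ Ioo (0 : ℝ) 1,
            dot (grad (fun y => (φ₁ y + φ₂ y) / 2) x) (grad (fun z => z.2) x))) :
    (∫ x in Ioo 0 L ×ˢ Ioo (0 : ℝ) 1, φ₂ x * x.2)
      - (∫ x in Ioo 0 L ×ˢ Ioo (0 : ℝ) 1, φ₁ x * x.2)
    = -(Δt * ((u_s * ∫ x in Ioo 0 L ×ˢ Ioo (0 : ℝ) 1, (φ₁ x + φ₂ x) / 2)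
          - κ * ∫ x in Ioo 0 L ×ˢ Ioo (0 : ℝ) 1, dot (grad (fun y => (φ₁ y + φ₂ y) / 2) x) eg))
      - Δt * ∫ x in Ioo 0 L ×ˢ Ioo (0 : ℝ) 1, ((φ₁ x + φ₂ x) / 2) * dot (u x) eg :=
  discrete_potential_energy_balance_general L u_s κ Δt hL hΔt u φ₁ φ₂ hu hφ₁ hφ₂ hdiv htop hleft
    hright htested
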